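/- Let T = R/Z, j ≠ 0, 0 < α ≤ 2, c_j = (j²/2)^{1/α}, V continuous on T, and G(x) = p_0 + ∑_{k=1}^n (p_k cos(2πkx) + q_k sin(2πkx)). Suppose m : T → R is continuous, positive, with ∫_T m = 1, and (m, H̄) solves j²/(2 m(x)^α) + V(x) = ∫_T G(x−y) m(y) dy + H̄ for all x. Then there exist real coefficients a_0*, ..., a_n*, b_1*, ..., b_n* such that m(x) = c_j / (a_0* + ∑_{k=1}^n (a_k* cos(2πkx) + b_k* sin(2πkx)) − V(x))^{1/α} for all x, H̄ = a_0* − p_0, and the denominator is strictly positive on T. -/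

import Mathlib

/-!
Expanding `cos (2πk(x - y))` and `sin (2πk(x - y))` shows that the correlation
`∫ G(x - y) m(y) dy` of `m` with a trigonometric polynomial `G` of degree `≤ n` is again a
trigonometric polynomial of degree `≤ n`, whose coefficients are built from those of `G` and
the Fourier moments of `m`. The equation then says that `j² / (2 m(x)^α)` is such a polynomial
minus `V(x)`, which is therefore positive, and taking `α`-th roots gives `m`.
-/

open Real MeasureTheory

noncomputable section

def trigPoly (n : ℕ) (a b : ℕ → ℝ) (x : ℝ) : ℝ :=
  a 0 + ∑ k ∈ Finset.Icc 1 n, (a k * cos (2 * π * k * x) + b k * sin (2 * π * k * x))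

def cosMoment (m : ℝ → ℝ) (s t : ℝ) (k : ℕ) : ℝ := ∫ y in s..t, cos (2 * π * k * y) * m y

def sinMoment (m : ℝ → ℝ) (s t : ℝ) (k : ℕ) : ℝ := ∫ y in s..t, sin (2 * π * k * y) * m y

end

lemma trigPoly_update_zero (n : ℕ) (a b : ℕ → ℝ) (c x : ℝ) :
    trigPoly n (Function.update a 0 c) b x = trigPoly n a b x - a 0 + c := by
  have hsum : ∀ k ∈ Finset.Icc 1 n, Function.update a 0 c k = a k := fun k hk =>
    Function.update_of_ne (Nat.one_le_iff_ne_zero.mp (Finset.mem_Icc.mp hk).1) _ _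
  simp only [trigPoly, Function.update_self]
  rw [Finset.sum_congr rfl fun k hk => by rw [hsum k hk]]
  ring

lemma trigPoly_sub_mul (n : ℕ) (p q : ℕ → ℝ) (m : ℝ → ℝ) (x y : ℝ) :
    trigPoly n p q (x - y) * m y = p 0 * m y + ∑ k ∈ Finset.Icc 1 n,
      ((p k * cos (2 * π * k * x) + q k * sin (2 * π * k * x)) * (cos (2 * π * k * y) * m y)
        + (p k * sin (2 * π * k * x) - q k * cos (2 * π * k * x)) * (sin (2 * π * k * y) * m y)) := by
  rw [trigPoly, add_mul, Finset.sum_mul]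
  congr 1
  refine Finset.sum_congr rfl fun k _ => ?_
  rw [mul_sub, cos_sub, sin_sub]
  ring

lemma integral_trigPoly_sub_mul {m : ℝ → ℝ} {s t : ℝ} (hm : IntervalIntegrable m volume s t)
    (n : ℕ) (p q : ℕ → ℝ) (x : ℝ) :
    ∫ y in s..t, trigPoly n p q (x - y) * m y =
      trigPoly n
        (Function.update (fun k => p k * cosMoment m s t k - q k * sinMoment m s t k) 0
          (p 0 * ∫ y in s..t, m y))
        (fun k => p k * sinMoment m s t k + q k * cosMoment m s t k) x := by
  have hcos (k : ℕ) : IntervalIntegrable (fun y => cos (2 * π * k * y) * m y) volume s t :=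
    hm.continuousOn_mul (by fun_prop)
  have hsin (k : ℕ) : IntervalIntegrable (fun y => sin (2 * π * k * y) * m y) volume s t :=
    hm.continuousOn_mul (by fun_prop)
  have hterm (k : ℕ) :=
    ((hcos k).const_mul (p k * cos (2 * π * k * x) + q k * sin (2 * π * k * x))).add
      ((hsin k).const_mul (p k * sin (2 * π * k * x) - q k * cos (2 * π * k * x)))
  have hsum := IntervalIntegrable.sum (Finset.Icc 1 n) fun k _ => hterm k
  simp only [Finset.sum_fn] at hsum
  simp_rw [trigPoly_sub_mul]
  rw [intervalIntegral.integral_add (hm.const_mul _) hsum,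
    intervalIntegral.integral_const_mul, intervalIntegral.integral_finsetSum fun k _ => hterm k,
    trigPoly_update_zero, trigPoly, add_sub_cancel_left, add_comm]
  refine congrArg (· + _) (Finset.sum_congr rfl fun k _ => ?_)
  rw [intervalIntegral.integral_add ((hcos k).const_mul _) ((hsin k).const_mul _),
    intervalIntegral.integral_const_mul, intervalIntegral.integral_const_mul, cosMoment, sinMoment]
  ring

lemma eq_rpow_div_rpow_of_div_rpow_eq {c t α d : ℝ} (hc : 0 < c) (ht : 0 < t) (hα : α ≠ 0)
    (h : c / t ^ α = d) : t = c ^ (1 / α) / d ^ (1 / α) := by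
  rw [← h, div_rpow hc.le (rpow_nonneg ht.le α), one_div, rpow_rpow_inv ht.le hα,
    div_div_cancel₀ (rpow_pos_of_pos hc _).ne']

theorem stmt_17_general (n : ℕ) (p q : ℕ → ℝ) (V G : ℝ → ℝ)
    (hG : ∀ x : ℝ, G x = p 0 + ∑ k ∈ Finset.Icc 1 n,
      (p k * Real.cos (2 * π * k * x) + q k * Real.sin (2 * π * k * x)))
    (j α : ℝ) (hj : j ≠ 0) (hα0 : 0 < α)
    (cj : ℝ) (hcj : cj = (j ^ 2 / 2) ^ ((1:ℝ) / α))
    (m : ℝ → ℝ) (H : ℝ) (hm : Continuous m)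
    (hmpos : ∀ x, 0 < m x) (hm1 : (∫ x in (0:ℝ)..1, m x) = 1)
    (heq : ∀ x : ℝ, j ^ 2 / (2 * m x ^ α) + V x = (∫ y in (0:ℝ)..1, G (x - y) * m y) + H) :
    ∃ a b : ℕ → ℝ,
      (∀ x : ℝ, 0 < a 0 + (∑ k ∈ Finset.Icc 1 n,
        (a k * Real.cos (2 * π * k * x) + b k * Real.sin (2 * π * k * x))) - V x) ∧
      (∀ x : ℝ, m x = cj / (a 0 + (∑ k ∈ Finset.Icc 1 n,
        (a k * Real.cos (2 * π * k * x) + b k * Real.sin (2 * π * k * x))) - V x) ^ ((1:ℝ) / α)) ∧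
      H = a 0 - p 0 := by
  have hGpoly : G = trigPoly n p q := funext hG
  set a₁ : ℕ → ℝ := fun k => p k * cosMoment m 0 1 k - q k * sinMoment m 0 1 k
  set b : ℕ → ℝ := fun k => p k * sinMoment m 0 1 k + q k * cosMoment m 0 1 k
  set a := Function.update a₁ 0 (p 0 + H)
  have hden (x : ℝ) : trigPoly n a b x - V x = j ^ 2 / (2 * m x ^ α) := by
    have hconv := integral_trigPoly_sub_mul (hm.intervalIntegrable 0 1) n p q x
    rw [hm1, mul_one, ← hGpoly] at hconv
    have ha : a = Function.update (Function.update a₁ 0 (p 0)) 0 (p 0 + H) :=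
      (Function.update_idem ..).symm
    rw [ha, trigPoly_update_zero, ← hconv, Function.update_self]
    linarith [heq x]
  refine ⟨a, b, fun x => ?_, fun x => ?_, by simp [a]⟩
  · change 0 < trigPoly n a b x - V x
    rw [hden]
    have := rpow_pos_of_pos (hmpos x) α
    positivity
  · change m x = cj / (trigPoly n a b x - V x) ^ (1 / α)
    rw [hcj, hden, div_mul_eq_div_div]
    exact eq_rpow_div_rpow_of_div_rpow_eq (by positivity) (hmpos x) hα0.ne' rfl

theorem stmt_17 (n : ℕ) (p q : ℕ → ℝ) (V G : ℝ → ℝ)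
    (hV : Continuous V) (hVper : Function.Periodic V 1)
    (hG : ∀ x : ℝ, G x = p 0 + ∑ k ∈ Finset.Icc 1 n,
      (p k * Real.cos (2 * π * k * x) + q k * Real.sin (2 * π * k * x)))
    (j α : ℝ) (hj : j ≠ 0) (hα0 : 0 < α) (hα2 : α ≤ 2)
    (cj : ℝ) (hcj : cj = (j ^ 2 / 2) ^ ((1:ℝ) / α))
    (m : ℝ → ℝ) (H : ℝ) (hm : Continuous m) (hmper : Function.Periodic m 1)
    (hmpos : ∀ x, 0 < m x) (hm1 : (∫ x in (0:ℝ)..1, m x) = 1)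
    (heq : ∀ x : ℝ, j ^ 2 / (2 * m x ^ α) + V x = (∫ y in (0:ℝ)..1, G (x - y) * m y) + H) :
    ∃ a b : ℕ → ℝ,
      (∀ x : ℝ, 0 < a 0 + (∑ k ∈ Finset.Icc 1 n,
        (a k * Real.cos (2 * π * k * x) + b k * Real.sin (2 * π * k * x))) - V x) ∧
      (∀ x : ℝ, m x = cj / (a 0 + (∑ k ∈ Finset.Icc 1 n,
        (a k * Real.cos (2 * π * k * x) + b k * Real.sin (2 * π * k * x))) - V x) ^ ((1:ℝ) / α)) ∧
      H = a 0 - p 0 :=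
  stmt_17_general n p q V G hG j α hj hα0 cj hcj m H hm hmpos hm1 heq
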